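/- Let 𝕋 = ℝ/ℤ, let α ∈ 𝕋 be irrational, and let f : 𝕋 → ℝ be continuous. If for every x ∈ 𝕋 one has sup_{n≥1} |f(x) + f(x+α) + … + f(x+(n−1)α)| < +∞, then there exists M ∈ ℕ such that |f(x) + f(x+α) + … + f(x+(n−1)α)| ≤ M for every n ≥ 1 and every x ∈ 𝕋. -/
import Mathlib


notation "𝕋" => AddCircle (1 : ℝ)

instance : Fact ((0 : ℝ) < 1) := ⟨one_pos⟩

lemma dense_zmultiples_of_irrational (α : 𝕋) (hα : ∀ q : ℚ, α ≠ ((q : ℝ) : 𝕋)) :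
    Dense (Set.range fun k : ℤ => k • α) := by
  obtain ⟨a, rfl⟩ : ∃ a : ℝ, (a : 𝕋) = α := Quotient.exists_rep α
  set S : AddSubgroup ℝ := AddSubgroup.zmultiples (1 : ℝ) ⊔ AddSubgroup.zmultiples a with hS
  rcases S.dense_or_cyclic with hd | ⟨g, hg⟩
  · have himg : Dense (((↑) : ℝ → 𝕋) '' (S : Set ℝ)) := by
      have hsurj : DenseRange ((↑) : ℝ → 𝕋) :=
        (QuotientAddGroup.mk'_surjective _).denseRange
      exact hsurj.dense_image (AddCircle.continuous_mk' (1:ℝ)) hd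
    refine himg.mono ?_
    rintro _ ⟨x, hx, rfl⟩
    rw [SetLike.mem_coe, AddSubgroup.mem_sup] at hx
    obtain ⟨y, hy, z, hz, rfl⟩ := hx
    obtain ⟨m, rfl⟩ := AddSubgroup.mem_zmultiples_iff.mp hy
    obtain ⟨n, rfl⟩ := AddSubgroup.mem_zmultiples_iff.mp hz
    refine ⟨n, ?_⟩
    push_cast
    have h1 : ((1 : ℝ) : 𝕋) = 0 := (AddCircle.coe_period 1)
    simp [h1]
  · exfalso
    have h1 : (1 : ℝ) ∈ S := AddSubgroup.mem_sup_left (AddSubgroup.mem_zmultiples _)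
    have ha : a ∈ S := AddSubgroup.mem_sup_right (AddSubgroup.mem_zmultiples _)
    rw [hg] at h1 ha
    obtain ⟨m, hm⟩ := AddSubgroup.mem_closure_singleton.mp h1
    obtain ⟨n, hn⟩ := AddSubgroup.mem_closure_singleton.mp ha
    have hm0 : (m : ℝ) ≠ 0 := by
      rintro h0
      rw [zsmul_eq_mul, h0, zero_mul] at hm
      exact one_ne_zero hm.symm
    have hg' : g = 1 / (m : ℝ) := by
      field_simp
      rw [zsmul_eq_mul] at hm
      linarith [hm]
    have : a = ((n : ℚ) / (m : ℚ) : ℚ) := by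
      rw [zsmul_eq_mul, hg'] at hn
      push_cast
      rw [← hn]
      ring
    exact hα ((n : ℚ) / (m : ℚ)) (by rw [← this])

/-- Let `α ∈ 𝕋` be irrational and `f : 𝕋 → ℝ` continuous.  If for every
`x ∈ 𝕋` the Birkhoff sums `f(x) + f(x+α) + … + f(x+(n-1)α)` are bounded in `n`, then they
are uniformly bounded: there is `M ∈ ℕ` with
`|f(x) + f(x+α) + … + f(x+(n-1)α)| ≤ M` for all `n ≥ 1` and all `x ∈ 𝕋`. -/
theorem uniform_bound_of_pointwise_bound
    (α : 𝕋) (hα : ∀ q : ℚ, α ≠ ((q : ℝ) : 𝕋))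
    (f : 𝕋 → ℝ) (hf : Continuous f)
    (h : ∀ x : 𝕋, ∃ C : ℝ, ∀ n : ℕ, 1 ≤ n →
      |∑ j ∈ Finset.range n, f (x + j • α)| ≤ C) :
    ∃ M : ℕ, ∀ x : 𝕋, ∀ n : ℕ, 1 ≤ n →
      |∑ j ∈ Finset.range n, f (x + j • α)| ≤ M := by
  classical
  set S : ℕ → 𝕋 → ℝ := fun n x => ∑ j ∈ Finset.range n, f (x + j • α) with hSdef
  -- continuity of Birkhoff sums
  have hScont : ∀ n, Continuous (S n) := by
    intro n
    exact continuous_finset_sum _ fun j _ => hf.comp (continuous_id.add continuous_const)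
  -- bound on f
  obtain ⟨B₀, hB₀⟩ := isCompact_univ.exists_bound_of_continuousOn (hf.continuousOn (s := Set.univ))
  set B : ℝ := max B₀ 0 with hBdef
  have hB : ∀ x, |f x| ≤ B := fun x => le_trans (hB₀ x trivial) (le_max_left _ _)
  have hB0 : 0 ≤ B := le_max_right _ _
  -- crude bound
  have hcrude : ∀ (y : 𝕋) (m : ℕ), |S m y| ≤ m * B := by
    intro y m
    calc |S m y| ≤ ∑ j ∈ Finset.range m, |f (y + j • α)| := Finset.abs_sum_le_sum_abs _ _
    _ ≤ ∑ _j ∈ Finset.range m, B := Finset.sum_le_sum fun j _ => hB _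
    _ = m * B := by simp [mul_comm]
  -- cocycle identity
  have hcoc : ∀ (y : 𝕋) (m n : ℕ), S (m + n) y = S m y + S n (y + m • α) := by
    intro y m n
    rw [hSdef]
    simp only
    rw [Finset.sum_range_add]
    congr 1
    refine Finset.sum_congr rfl fun j _ => ?_
    congr 1
    rw [add_nsmul, add_assoc]
  -- the closed sets
  set E : ℕ → Set 𝕋 := fun M => {x | ∀ n, 1 ≤ n → |S n x| ≤ M} with hEdef
  have hEclosed : ∀ M, IsClosed (E M) := by
    intro M
    have : E M = ⋂ n, ⋂ _ : 1 ≤ n, {x | |S n x| ≤ M} := by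
      ext x; simp [hEdef, Set.mem_iInter]
    rw [this]
    exact isClosed_iInter fun n => isClosed_iInter fun _ =>
      isClosed_le ((hScont n).abs) continuous_const
  have hEunion : (⋃ M, E M) = Set.univ := by
    refine Set.eq_univ_of_forall fun x => ?_
    obtain ⟨C, hC⟩ := h x
    refine Set.mem_iUnion.mpr ⟨⌈C⌉₊, fun n hn => (hC n hn).trans (Nat.le_ceil C)⟩
  obtain ⟨M, hM⟩ := nonempty_interior_of_iUnion_of_closed hEclosed hEunion
  set U : Set 𝕋 := interior (E M) with hUdef
  have hUopen : IsOpen U := isOpen_interior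
  have hUE : U ⊆ E M := interior_subset
  -- every point can be moved into U by an integer multiple of α
  have hcover : Set.univ ⊆ ⋃ k : ℤ, (fun y : 𝕋 => y - k • α) ⁻¹' U := by
    intro x _
    have hW : IsOpen {z : 𝕋 | x - z ∈ U} :=
      hUopen.preimage (continuous_const.sub continuous_id)
    have hWne : {z : 𝕋 | x - z ∈ U}.Nonempty := by
      obtain ⟨u, hu⟩ := hM
      exact ⟨x - u, by simpa using hu⟩
    obtain ⟨z, hzs, hzU⟩ :=
      (dense_zmultiples_of_irrational α hα).exists_mem_open hW hWne
    obtain ⟨k, rfl⟩ := hzs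
    exact Set.mem_iUnion.mpr ⟨k, hzU⟩
  obtain ⟨t, ht⟩ := isCompact_univ.elim_finite_subcover _
    (fun k : ℤ => hUopen.preimage (continuous_id.sub continuous_const)) hcover
  set K : ℕ := t.sup fun k => k.natAbs with hKdef
  refine ⟨⌈(M : ℝ) + K * B⌉₊, fun x n hn => ?_⟩
  refine le_trans ?_ (Nat.le_ceil _)
  obtain ⟨k, hkt, hk⟩ : ∃ k ∈ t, x - k • α ∈ U := by
    have := ht (Set.mem_univ x)
    simpa using this
  have hKk : k.natAbs ≤ K := Finset.le_sup hkt
  set y : 𝕋 := x - k • α with hydef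
  have hyE : y ∈ E M := hUE hk
  rcases le_or_gt 0 k with hk0 | hk0
  · -- k ≥ 0 : x = y + m • α, m = k.toNat
    set m : ℕ := k.toNat with hmdef
    have hms : m • α = k • α := by
      rw [← natCast_zsmul, hmdef, Int.toNat_of_nonneg hk0]
    have hxy : x = y + m • α := by
      rw [hydef, hms, sub_add_cancel x (k • α)]
    have hid := hcoc y m n
    rw [← hxy] at hid
    have h1 : |S (m + n) y| ≤ M := hyE _ (by omega)
    have h2 : |S m y| ≤ m * B := hcrude y m
    have hmK : (m : ℝ) ≤ K := by
      have : m ≤ K := by have := hKk; omega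
      exact_mod_cast this
    have : |S n x| ≤ |S (m + n) y| + |S m y| := by
      rw [show S n x = S (m + n) y - S m y by rw [hid]; ring]
      exact abs_sub _ _
    calc |S n x| ≤ M + m * B := by linarith
    _ ≤ M + K * B := by nlinarith
  · -- k < 0 : y = x + m • α, m = (-k).toNat ≥ 1
    set m : ℕ := (-k).toNat with hmdef
    have hm1 : 1 ≤ m := by omega
    have hyx : y = x + m • α := by
      rw [hydef]
      rw [sub_eq_add_neg, ← neg_zsmul]
      congr 1
      rw [← natCast_zsmul, Int.toNat_of_nonneg (by omega)]
    have hmK : (m : ℝ) ≤ K := by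
      have : m ≤ K := by have := hKk; omega
      exact_mod_cast this
    rcases le_or_gt n m with hnm | hnm
    · have h2 : |S n x| ≤ n * B := hcrude x n
      have : (n : ℝ) ≤ m := by exact_mod_cast hnm
      have hM0 : (0 : ℝ) ≤ M := Nat.cast_nonneg M
      calc |S n x| ≤ n * B := h2
      _ ≤ K * B := by nlinarith
      _ ≤ M + K * B := by linarith
    · have hid := hcoc x m (n - m)
      rw [← hyx, show m + (n - m) = n by omega] at hid
      have h1 : |S (n - m) y| ≤ M := hyE _ (by omega)
      have h2 : |S m x| ≤ m * B := hcrude x m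
      have : |S n x| ≤ |S m x| + |S (n - m) y| := hid ▸ abs_add_le _ _
      calc |S n x| ≤ m * B + M := by linarith
      _ ≤ M + K * B := by nlinarith
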